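/- arXiv:2001.08122 — 5 statements merged into one kernel-verified Lean document; each statement's English description precedes it below -/
import Mathlib

section
/- For every finite simple graph G, itp(G) ≤ 2^{vc(G)} + vc(G), where vc(G) denotes the minimum size of a vertex cover of G. -/
open scoped Classical

open scoped Classical

/-- Two vertices have the same type iff `N(v) \ {u} = N(u) \ {v}`. -/
def sameType {V : Type*} (G : SimpleGraph V) (u v : V) : Prop :=
  G.neighborSet v \ {u} = G.neighborSet u \ {v}

theorem sameType_equivalence {V : Type*} (G : SimpleGraph V) : Equivalence (sameType G) := by
  constructor
  · intro u; rfl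
  · intro u v h; exact h.symm
  · intro u v w h1 h2
    have h1' : ∀ x : V, (G.Adj v x ∧ x ≠ u) ↔ (G.Adj u x ∧ x ≠ v) := by
      intro x
      have := Set.ext_iff.mp h1 x
      simpa [Set.mem_diff, SimpleGraph.mem_neighborSet, Set.mem_singleton_iff] using this
    have h2' : ∀ x : V, (G.Adj w x ∧ x ≠ v) ↔ (G.Adj v x ∧ x ≠ w) := by
      intro x
      have := Set.ext_iff.mp h2 x
      simpa [Set.mem_diff, SimpleGraph.mem_neighborSet, Set.mem_singleton_iff] using this
    ext x
    simp only [Set.mem_diff, SimpleGraph.mem_neighborSet, Set.mem_singleton_iff]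
    by_cases hxv : x = v
    · subst hxv
      by_cases huw : w = u
      · subst huw; tauto
      · constructor
        · rintro ⟨hadj, hxu⟩
          have h3 : G.Adj u w ∧ w ≠ x := (h1' w).mp ⟨hadj.symm, huw⟩
          have h5 : G.Adj x u ∧ u ≠ w := (h2' u).mp ⟨h3.1.symm, Ne.symm hxu⟩
          exact ⟨h5.1.symm, hadj.ne'⟩
        · rintro ⟨hadj, hxw⟩
          have h5 : G.Adj w u ∧ u ≠ x := (h2' u).mpr ⟨hadj.symm, Ne.symm huw⟩
          have h3 : G.Adj x w ∧ w ≠ u := (h1' w).mpr ⟨h5.1.symm, Ne.symm hxw⟩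
          exact ⟨h3.1.symm, Ne.symm h5.2⟩
    · constructor
      · rintro ⟨hadj, hxu⟩
        have t1 := (h2' x).mp ⟨hadj, hxv⟩
        have t2 := (h1' x).mp ⟨t1.1, hxu⟩
        exact ⟨t2.1, t1.2⟩
      · rintro ⟨hadj, hxw⟩
        have t1 := (h1' x).mpr ⟨hadj, hxv⟩
        have t2 := (h2' x).mpr ⟨t1.1, hxw⟩
        exact ⟨t2.1, t1.2⟩

/-- The setoid of the same-type relation. -/
def typeSetoid {V : Type*} (G : SimpleGraph V) : Setoid V :=
  ⟨sameType G, sameType_equivalence G⟩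

/-- The class of the type partition corresponding to a vertex of the type graph. -/
def typeClass {V : Type*} (G : SimpleGraph V) (x : Quotient (typeSetoid G)) : Set V :=
  {v | Quotient.mk (typeSetoid G) v = x}

/-- The type graph: one vertex per class of the type partition, two distinct classes
being adjacent iff every vertex of one is adjacent to every vertex of the other. -/
def typeGraph {V : Type*} (G : SimpleGraph V) : SimpleGraph (Quotient (typeSetoid G)) where
  Adj x y := x ≠ y ∧ ∀ u v : V,
    Quotient.mk (typeSetoid G) u = x → Quotient.mk (typeSetoid G) v = y → G.Adj u v
  symm := by
    constructor
    rintro x y ⟨hxy, h⟩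
    exact ⟨hxy.symm, fun u v hu hv => (h v u hv hu).symm⟩
  loopless := by constructor; rintro x ⟨hxx, -⟩; exact hxx rfl

/-- A base graph is one whose type partition consists only of singletons. -/
def IsBaseGraph {V : Type*} (G : SimpleGraph V) : Prop :=
  ∀ u v : V, sameType G u v → u = v

noncomputable def itpAux : (n : ℕ) → (V : Type u) → SimpleGraph V → ℕ
  | 0, V, _ => Nat.card V
  | n + 1, V, G => if IsBaseGraph G then Nat.card V else itpAux n _ (typeGraph G)

/-- The iterated type partition number: the number of vertices of the first base graph
in the sequence `H⁰ = G`, `Hⁱ = typeGraph Hⁱ⁻¹`. -/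
noncomputable def itp {V : Type u} (G : SimpleGraph V) : ℕ :=
  itpAux (Nat.card V) V G

/-- The neighborhood diversity: the number of classes of the type partition. -/
noncomputable def nd {V : Type*} (G : SimpleGraph V) : ℕ :=
  Nat.card (Quotient (typeSetoid G))

/-- A vertex cover: a set of vertices meeting every edge. -/
def IsVertexCover {V : Type*} (G : SimpleGraph V) (C : Set V) : Prop :=
  ∀ ⦃u v⦄, G.Adj u v → u ∈ C ∨ v ∈ C

/-- The minimum size of a vertex cover. -/
noncomputable def vcNum {V : Type*} (G : SimpleGraph V) : ℕ :=
  sInf {n | ∃ C : Set V, IsVertexCover G C ∧ C.ncard = n}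


/-! Passing to the type graph never increases the number of vertices, and a base graph is its own
type partition, so `itp G ≤ nd G`. Fix a minimum vertex cover `C`. The vertices outside `C` form an
independent set, so each of them has its neighbourhood inside `C`, and two of them with the same
neighbourhood have the same type. Hence there are at most `2 ^ |C|` types outside `C`, and at most
`|C|` types meeting `C`. -/

universe u

lemma itpAux_le_card : ∀ (n : ℕ) (V : Type u) [Finite V] (G : SimpleGraph V),
    itpAux n V G ≤ Nat.card V
  | 0, _, _, _ => le_rfl
  | n + 1, V, _, G => by
    rw [itpAux]
    split
    · exact le_rfl
    · exact (itpAux_le_card n _ (typeGraph G)).trans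
        (Nat.card_le_card_of_surjective _ Quotient.mk''_surjective)

lemma IsBaseGraph.nd_eq_card {V : Type*} {G : SimpleGraph V} (hG : IsBaseGraph G) :
    nd G = Nat.card V :=
  (Nat.card_eq_of_bijective _
    ⟨fun u v h => hG u v (Quotient.exact h), Quotient.mk''_surjective⟩).symm

lemma itpAux_succ_le_nd (n : ℕ) {V : Type u} [Finite V] (G : SimpleGraph V) :
    itpAux (n + 1) V G ≤ nd G := by
  rw [itpAux]
  split
  · next hG => exact hG.nd_eq_card.ge
  · exact itpAux_le_card n _ (typeGraph G)

lemma itp_le_nd {V : Type u} [Finite V] (G : SimpleGraph V) : itp G ≤ nd G := by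
  rw [itp]
  cases h : Nat.card V with
  | zero => simp [itpAux, h]
  | succ n => exact itpAux_succ_le_nd n G

lemma IsVertexCover.neighborSet_subset {V : Type*} {G : SimpleGraph V} {C : Set V}
    (hC : IsVertexCover G C) {v : V} (hv : v ∉ C) : G.neighborSet v ⊆ C :=
  fun _ hw => (hC hw).resolve_left hv

lemma IsVertexCover.sameType_of_adj_iff {V : Type*} {G : SimpleGraph V} {C : Set V}
    (hC : IsVertexCover G C) {u v : V} (hu : u ∉ C) (hv : v ∉ C)
    (huv : ∀ c ∈ C, G.Adj u c ↔ G.Adj v c) : sameType G u v := by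
  have hN : G.neighborSet u = G.neighborSet v := by
    ext w
    exact ⟨fun hw => (huv w (hC.neighborSet_subset hu hw)).mp hw,
      fun hw => (huv w (hC.neighborSet_subset hv hw)).mpr hw⟩
  have hu' : u ∉ G.neighborSet v := fun h => hu (hC.neighborSet_subset hv h)
  have hv' : v ∉ G.neighborSet v := G.notMem_neighborSet_self
  rw [sameType, hN, Set.sdiff_singleton_eq_self hu', Set.sdiff_singleton_eq_self hv']

lemma nd_le_of_isVertexCover {V : Type*} [Finite V] {G : SimpleGraph V} {C : Set V}
    (hC : IsVertexCover G C) : nd G ≤ 2 ^ C.ncard + C.ncard := by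
  have := Fintype.ofFinite V
  let signature : V → Set C ⊕ C := fun v =>
    if hv : v ∈ C then .inr ⟨v, hv⟩ else .inl {c | G.Adj v c}
  have hsig : ∀ u v, signature u = signature v → sameType G u v := by
    intro u v h
    by_cases hu : u ∈ C <;> by_cases hv : v ∈ C <;> simp [signature, hu, hv] at h
    · subst h; rfl
    · exact hC.sameType_of_adj_iff hu hv fun c hc => by simpa using Set.ext_iff.mp h ⟨c, hc⟩
  calc nd G ≤ Nat.card (Set C ⊕ C) :=
        Nat.card_le_card_of_injective (signature ∘ Quotient.out) fun x y h => by
          rw [← Quotient.out_eq x, ← Quotient.out_eq y]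
          exact Quotient.sound (hsig _ _ h)
    _ = 2 ^ C.ncard + C.ncard := by
      rw [Nat.card_sum, Nat.card_eq_fintype_card, Fintype.card_set, ← Nat.card_eq_fintype_card,
        Nat.card_coe_set_eq]

lemma exists_isVertexCover_ncard_eq_vcNum {V : Type*} (G : SimpleGraph V) :
    ∃ C : Set V, IsVertexCover G C ∧ C.ncard = vcNum G :=
  Nat.sInf_mem (s := {n | ∃ C : Set V, IsVertexCover G C ∧ C.ncard = n})
    ⟨_, Set.univ, fun _ _ _ => Or.inl trivial, rfl⟩

/-- `itp(G) ≤ 2 ^ vc(G) + vc(G)`. -/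
theorem itp_le_two_pow_vc {V : Type} [Fintype V] (G : SimpleGraph V) :
    itp G ≤ 2 ^ vcNum G + vcNum G := by
  obtain ⟨C, hC, hcard⟩ := exists_isVertexCover_ncard_eq_vcNum G
  exact (itp_le_nd G).trans (hcard ▸ nd_le_of_isVertexCover hC)
end

section
/- If the Bin-Packing instance (A = {a_1,...,a_ℓ}, k, B) is a YES instance, then the reduction graph G built from it admits an equitable (k+3)-coloring. -/
open scoped Classical

/-- Vertices of the `(k,ℓ,B)`-chain: independent sets `S_1,…,S_{k+1}` with
`|S_i| = B` for `i ≤ k` and `|S_{k+1}| = ℓ+1`. -/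
abbrev ChainV (l k B : ℕ) : Type :=
  (i : Fin (k + 1)) × Fin (if (i : ℕ) < k then B else l + 1)

/-- Vertices of the flowers `F_{a_1,k},…,F_{a_ℓ,k}, F_{B,k}`: the flower index
`j : Option (Fin ℓ)` (with `none` standing for `F_{B,k}`), and inside a flower either the
central vertex (`none`) or a vertex `(i,p)` of the `i`-th clique of size `k`. -/
abbrev FlowerV (l k B : ℕ) (a : Fin l → ℕ) : Type :=
  (j : Option (Fin l)) × Option (Fin (j.elim B a + 1) × Fin k)

/-- Vertices of the reduction graph: flower vertices plus the vertices of two chains. -/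
abbrev RV (l k B : ℕ) (a : Fin l → ℕ) : Type :=
  FlowerV l k B a ⊕ (Fin 2 × ChainV l k B)

/-- The reduction graph built from the Bin-Packing instance `(a_1,…,a_ℓ; k; B)`:
the disjoint union of two `(k,ℓ,B)`-chains and of the flowers
`F_{a_1,k},…,F_{a_ℓ,k},F_{B,k}`, plus all edges between flower and chain vertices. -/
def reductionGraph (l k B : ℕ) (a : Fin l → ℕ) : SimpleGraph (RV l k B a) where
  Adj x y :=
    match x, y with
    | Sum.inl f, Sum.inl f' =>
        f.1 = f'.1 ∧ f ≠ f' ∧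
          ∀ (i : Fin (f.1.elim B a + 1)) (p : Fin k) (i' : Fin (f'.1.elim B a + 1))
            (p' : Fin k), f.2 = some (i, p) → f'.2 = some (i', p') → (i : ℕ) = (i' : ℕ)
    | Sum.inl _, Sum.inr _ => True
    | Sum.inr _, Sum.inl _ => True
    | Sum.inr q, Sum.inr q' =>
        q.1 = q'.1 ∧ ((q.2.1 : ℕ) + 1 = (q'.2.1 : ℕ) ∨ (q'.2.1 : ℕ) + 1 = (q.2.1 : ℕ))
  symm := by
    constructor
    rintro (f | q) (f' | q') h
    · exact ⟨h.1.symm, h.2.1.symm, fun i p i' p' h1 h2 => (h.2.2 i' p' i p h2 h1).symm⟩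
    · trivial
    · trivial
    · exact ⟨h.1.symm, h.2.symm⟩
  loopless := by
    constructor
    rintro (f | q) h
    · exact h.2.1 rfl
    · rcases h.2 with h' | h' <;> omega
/-- `c` is an equitable coloring of `G` with exactly `m` colors. -/
def IsEquitableColoring {V : Type*} (G : SimpleGraph V) (m : ℕ) (c : V → Fin m) : Prop :=
  (∀ ⦃u v⦄, G.Adj u v → c u ≠ c v) ∧ Function.Surjective c ∧
    ∀ q : Fin m, Nat.card {v // c v = q} = Nat.card V / m ∨
      Nat.card {v // c v = q} = (Nat.card V + m - 1) / m

/-!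
Extend the packing `P` by an extra bin `k` holding one item of size `B`, and colour the centre of
each flower by the bin of its item. The `k` vertices of every clique of a flower get the `k`
colours of `{0, …, k}` other than that of its centre, and the layers of the two chains are
coloured `k+1, k+2` alternately, with opposite phases. A colour `q ≤ k` occurs once in each of the
`(k+1)B + ℓ + 1` cliques, except that every flower centred at `q` exchanges its cliques for its
centre; as each bin holds items of total size `B`, the class has `kB + ℓ + 1` vertices. Every chain
layer is coloured `k+1` in one chain and `k+2` in the other, so these classes have the size of a
chain, which is again `kB + ℓ + 1`.
-/

theorem isEquitableColoring_of_card_fiber_eq {V κ : Type*} [Fintype V] [Fintype κ]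
    {G : SimpleGraph V} {m s : ℕ} (e : κ ≃ Fin m) {c : V → κ}
    (hc : ∀ ⦃u v⦄, G.Adj u v → c u ≠ c v) (hs : 0 < s)
    (hfiber : ∀ q, Nat.card {v // c v = q} = s) :
    IsEquitableColoring G m (e ∘ c) := by
  have hfiber' : ∀ q : Fin m, Nat.card {v // (e ∘ c) v = q} = s := fun q => by
    rw [← hfiber (e.symm q)]
    exact Nat.card_congr (Equiv.subtypeEquivRight fun v => e.eq_symm_apply.symm)
  have hcard : Nat.card V = m * s := by
    rw [← Nat.card_congr (Equiv.sigmaFiberEquiv (e ∘ c)), Nat.card_sigma,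
      Finset.sum_congr rfl fun q _ => hfiber' q]
    simp
  refine ⟨fun u v huv h => hc huv (e.injective h), fun q => ?_, fun q => Or.inl ?_⟩
  · obtain ⟨⟨v, hv⟩⟩ : Nonempty {v // (e ∘ c) v = q} := (Nat.card_pos_iff.mp (hfiber' q ▸ hs)).1
    exact ⟨v, hv⟩
  · rw [hfiber', hcard, Nat.mul_div_cancel_left _ (Fin.pos q)]

section Flower

variable {k : ℕ}

def flowerColor (c : Fin (k + 1)) {α : Type*} : Option (α × Fin k) → Fin (k + 1)
  | none => c
  | some x => c.succAbove x.2

theorem card_flowerColor_fiber {α : Type*} [Fintype α] (c q : Fin (k + 1)) :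
    Nat.card {x : Option (α × Fin k) // flowerColor c x = q} =
      if c = q then 1 else Fintype.card α := by
  rw [Nat.card_eq_fintype_card, Fintype.card_subtype, Finset.card_filter, Fintype.sum_option,
    Fintype.sum_prod_type]
  simp only [flowerColor]
  split_ifs with h
  · subst h
    simp
  · obtain ⟨p, rfl⟩ := Fin.exists_succAbove_eq (Ne.symm h)
    simp

theorem card_flowerColor_sigma_fiber {J : Type*} [Fintype J] (n : J → ℕ) (c : J → Fin (k + 1))
    (q : Fin (k + 1)) :
    Nat.card {v : Σ j, Option (Fin (n j + 1) × Fin k) // flowerColor (c v.1) v.2 = q} =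
      ∑ j, if c j = q then 1 else n j + 1 := by
  rw [Nat.card_eq_fintype_card, Fintype.card_subtype, Finset.card_filter, ← Finset.univ_sigma_univ,
    Finset.sum_sigma]
  refine Finset.sum_congr rfl fun j _ => ?_
  rw [← Finset.card_filter, ← Fintype.card_subtype, ← Nat.card_eq_fintype_card]
  exact (card_flowerColor_fiber (c j) q).trans (by rw [Fintype.card_fin])

theorem card_flowerColor_sigma_fiber_of_packing {J : Type*} [Fintype J] {n : J → ℕ}
    {c : J → Fin (k + 1)} {B : ℕ} (hpack : ∀ q, ∑ j ∈ Finset.univ.filter (c · = q), n j = B)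
    (q : Fin (k + 1)) :
    Nat.card {v : Σ j, Option (Fin (n j + 1) × Fin k) // flowerColor (c v.1) v.2 = q} =
      k * B + Fintype.card J := by
  have htotal : ∑ j, n j = (k + 1) * B := by
    rw [← Finset.sum_fiberwise Finset.univ c n]
    simp [hpack]
  have hq : Nat.card {v : Σ j, Option (Fin (n j + 1) × Fin k) // flowerColor (c v.1) v.2 = q} + B
      = ∑ j, (n j + 1) := by
    rw [card_flowerColor_sigma_fiber, ← hpack q, Finset.sum_filter, ← Finset.sum_add_distrib]
    refine Finset.sum_congr rfl fun j _ => ?_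
    split_ifs <;> omega
  rw [Finset.sum_add_distrib, htotal] at hq
  simp only [Finset.sum_const, Finset.card_univ, smul_eq_mul, mul_one] at hq
  linarith

end Flower

theorem card_fiber_add_comp_snd {G X : Type*} [AddGroup G] (f : X → G) (q : G) :
    Nat.card {x : G × X // x.1 + f x.2 = q} = Nat.card X :=
  Nat.card_congr
    { toFun := fun x => x.1.2
      invFun := fun y => ⟨(q - f y, y), sub_add_cancel q (f y)⟩
      left_inv := fun ⟨(t, y), h⟩ => by simp [← h]
      right_inv := fun _ => rfl }

theorem Nat.card_fiber_sumMap_inl {α β γ δ : Type*} [Finite α] [Finite β] (f : α → γ) (g : β → δ)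
    (r : γ) : Nat.card {v // Sum.map f g v = .inl r} = Nat.card {x // f x = r} := by
  rw [Nat.card_congr Equiv.subtypeSum, Nat.card_sum]
  simp

theorem Nat.card_fiber_sumMap_inr {α β γ δ : Type*} [Finite α] [Finite β] (f : α → γ) (g : β → δ)
    (r : δ) : Nat.card {v // Sum.map f g v = .inr r} = Nat.card {x // g x = r} := by
  rw [Nat.card_congr Equiv.subtypeSum, Nat.card_sum]
  simp

theorem card_chainV (l k B : ℕ) : Nat.card (ChainV l k B) = k * B + (l + 1) := by
  rw [Nat.card_sigma, Fin.sum_univ_castSucc]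
  simp

section Reduction

variable {l k B : ℕ} {a : Fin l → ℕ}

def binColor (P : Fin l → Fin k) (j : Option (Fin l)) : Fin (k + 1) :=
  j.elim (Fin.last k) fun j => (P j).castSucc

theorem sum_binColor_fiber {P : Fin l → Fin k}
    (hP : ∀ i : Fin k, ∑ j ∈ Finset.univ.filter fun j => P j = i, a j = B) (q : Fin (k + 1)) :
    ∑ j ∈ Finset.univ.filter (binColor P · = q), j.elim B a = B := by
  rw [Finset.sum_filter, Fintype.sum_option]
  induction q using Fin.lastCases with
  | last => simp [binColor, Fin.castSucc_ne_last]
  | cast r => simpa [binColor, Finset.sum_filter, (Fin.castSucc_ne_last r).symm] using hP r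

variable (B a) in
def reductionColoring (P : Fin l → Fin k) : RV l k B a → Fin (k + 1) ⊕ Fin 2 :=
  Sum.map (fun f => flowerColor (binColor P f.1) f.2) fun x => x.1 + Fin.ofNat 2 x.2.1

theorem reductionColoring_ne_of_adj (P : Fin l → Fin k) ⦃u v : RV l k B a⦄
    (huv : (reductionGraph l k B a).Adj u v) :
    reductionColoring B a P u ≠ reductionColoring B a P v := by
  rcases u with ⟨j, x⟩ | ⟨t, i, s⟩ <;> rcases v with ⟨j', x'⟩ | ⟨t', i', s'⟩
  · obtain ⟨rfl, hne, hclique⟩ := huv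
    rcases x with _ | ⟨i, p⟩ <;> rcases x' with _ | ⟨i', p'⟩
    · exact absurd rfl hne
    · simp [reductionColoring, flowerColor]
    · simp [reductionColoring, flowerColor]
    · obtain rfl : i = i' := Fin.ext (hclique i p i' p' rfl rfl)
      simpa [reductionColoring, flowerColor] using fun h => hne (by rw [h])
  · simp [reductionColoring]
  · simp [reductionColoring]
  · obtain ⟨rfl, hi⟩ := huv
    dsimp only at hi
    simp only [reductionColoring, Sum.map_inr, ne_eq, Sum.inr.injEq, add_right_inj, Fin.ext_iff,
      Fin.val_ofNat]
    omega

theorem card_reductionColoring_fiber {P : Fin l → Fin k}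
    (hP : ∀ i : Fin k, ∑ j ∈ Finset.univ.filter fun j => P j = i, a j = B)
    (q : Fin (k + 1) ⊕ Fin 2) :
    Nat.card {v // reductionColoring B a P v = q} = k * B + (l + 1) := by
  rcases q with r | r
  · rw [reductionColoring, Nat.card_fiber_sumMap_inl,
      card_flowerColor_sigma_fiber_of_packing (sum_binColor_fiber hP)]
    simp
  · rw [reductionColoring, Nat.card_fiber_sumMap_inr, ← card_chainV l k B]
    exact card_fiber_add_comp_snd (fun y : ChainV l k B => Fin.ofNat 2 y.1) r

end Reduction

theorem equitable_of_binpacking_general (l k B : ℕ) (a : Fin l → ℕ)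
    (hyes : ∃ P : Fin l → Fin k, ∀ i : Fin k,
      ∑ j ∈ Finset.univ.filter fun j => P j = i, a j = B) :
    ∃ c : RV l k B a → Fin (k + 3),
      IsEquitableColoring (reductionGraph l k B a) (k + 3) c := by
  obtain ⟨P, hP⟩ := hyes
  exact ⟨_, isEquitableColoring_of_card_fiber_eq (finSumFinEquiv (m := k + 1) (n := 2))
    (reductionColoring_ne_of_adj P) (Nat.succ_pos _) (card_reductionColoring_fiber hP)⟩

/-- If the Bin-Packing instance is a YES instance, the reduction graph admits an
equitable `(k+3)`-coloring. -/
theorem equitable_of_binpacking (l k B : ℕ) (a : Fin l → ℕ)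
    (ha : ∀ j, 0 < a j) (hk : 0 < k) (hB : 0 < B)
    (hyes : ∃ P : Fin l → Fin k, ∀ i : Fin k,
      ∑ j ∈ Finset.univ.filter fun j => P j = i, a j = B) :
    ∃ c : RV l k B a → Fin (k + 3),
      IsEquitableColoring (reductionGraph l k B a) (k + 3) c :=
  equitable_of_binpacking_general l k B a hyes
end

section
/- In every equitable (k+3)-coloring of the reduction graph G built from a Bin-Packing instance (A = {a_1,...,a_ℓ}, k, B), exactly two colors occur on the vertices of the two chains Q' and Q'', and neither of these two colors occurs on any vertex of the flowers F_{B,k}, F_{a_1,k},...,F_{a_ℓ,k}. -/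
open scoped Classical

/-!
Only properness of the coloring matters. The chain contains an edge, so it sees at least two
colors; the flower `F_{B,k}` contains a clique on its centre and one petal, so the flowers see at
least `k + 1` colors; and since every flower vertex is adjacent to every chain vertex, these two
sets of colors are disjoint. With `k + 3` colors in total, the chain sees exactly two.
-/

section ProperColoring

variable {V α ι : Type*} {G : SimpleGraph V} {c : V → α}

theorem ncard_range_comp_of_pairwise_adj [Finite ι] (hc : ∀ ⦃u v⦄, G.Adj u v → c u ≠ c v)
    {f : ι → V} (hf : Pairwise fun i j => G.Adj (f i) (f j)) :
    (Set.range (c ∘ f)).ncard = Nat.card ι := by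
  refine Set.ncard_range_of_injective fun i j hij => ?_
  by_contra hne
  exact hc (hf hne) hij

theorem disjoint_range_comp_of_forall_adj {ι' : Type*}
    (hc : ∀ ⦃u v⦄, G.Adj u v → c u ≠ c v)
    {f : ι → V} {g : ι' → V} (hfg : ∀ i j, G.Adj (f i) (g j)) :
    Disjoint (Set.range (c ∘ f)) (Set.range (c ∘ g)) := by
  rw [Set.disjoint_left]
  rintro _ ⟨i, rfl⟩ ⟨j, hj⟩
  exact hc (hfg i j) hj.symm

end ProperColoring

namespace reductionGraph

variable {l k B : ℕ} {a : Fin l → ℕ}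

theorem adj_inl_inr (f : FlowerV l k B a) (v : Fin 2 × ChainV l k B) :
    (reductionGraph l k B a).Adj (Sum.inl f) (Sum.inr v) :=
  trivial

/-- The clique of `F_{B,k}` formed by its centre (`o = none`) and its first petal. -/
def centralClique (o : Option (Fin k)) : FlowerV l k B a :=
  ⟨none, o.map fun p => (0, p)⟩

theorem pairwise_adj_centralClique :
    Pairwise fun o o' : Option (Fin k) =>
      (reductionGraph l k B a).Adj (Sum.inl (centralClique o)) (Sum.inl (centralClique o')) := by
  intro o o' hne
  refine ⟨rfl, fun h => hne ?_, ?_⟩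
  · exact Option.map_injective (fun _ _ h => (Prod.mk.inj h).2) (eq_of_heq (Sigma.ext_iff.mp h).2)
  · intro i p i' p' h h'
    obtain ⟨_, -, hi⟩ := Option.map_eq_some_iff.mp h
    obtain ⟨_, -, hi'⟩ := Option.map_eq_some_iff.mp h'
    rw [← (Prod.mk.inj hi).1, ← (Prod.mk.inj hi').1]

/-- The first vertices of the levels `S_1` and `S_2` of the first chain. -/
def chainEdge (hk : 0 < k) (hB : 0 < B) (i : Fin 2) : Fin 2 × ChainV l k B :=
  (0, ⟨Fin.castLE (by omega) i, ⟨0, by split <;> omega⟩⟩)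

theorem pairwise_adj_chainEdge (hk : 0 < k) (hB : 0 < B) :
    Pairwise fun i j : Fin 2 =>
      (reductionGraph l k B a).Adj (Sum.inr (chainEdge hk hB i)) (Sum.inr (chainEdge hk hB j)) := by
  intro i j hne
  refine ⟨rfl, ?_⟩
  have := Fin.val_ne_of_ne hne
  simp only [chainEdge, Fin.val_castLE]
  omega

end reductionGraph

open reductionGraph in
theorem chain_uses_two_colors_general (l k B : ℕ) (a : Fin l → ℕ)
    (hk : 0 < k) (hB : 0 < B)
    (c : RV l k B a → Fin (k + 3))
    (hc : IsEquitableColoring (reductionGraph l k B a) (k + 3) c) :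
    {q : Fin (k + 3) | ∃ v : Fin 2 × ChainV l k B, c (Sum.inr v) = q}.ncard = 2 ∧
      ∀ q : Fin (k + 3), (∃ v : Fin 2 × ChainV l k B, c (Sum.inr v) = q) →
        ¬ ∃ f : FlowerV l k B a, c (Sum.inl f) = q := by
  obtain ⟨hproper, -, -⟩ := hc
  have hdisj : Disjoint (Set.range (c ∘ Sum.inr)) (Set.range (c ∘ Sum.inl)) :=
    disjoint_range_comp_of_forall_adj (f := Sum.inr) (g := Sum.inl) hproper fun v f =>
      (adj_inl_inr f v).symm
  have hchain : 2 ≤ (Set.range (c ∘ Sum.inr)).ncard :=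
    calc 2 = (Set.range ((c ∘ Sum.inr) ∘ chainEdge hk hB)).ncard :=
          ((ncard_range_comp_of_pairwise_adj hproper (pairwise_adj_chainEdge hk hB)).trans
            (Nat.card_fin 2)).symm
      _ ≤ _ := Set.ncard_le_ncard (Set.range_comp_subset_range _ _)
  have hflower : k + 1 ≤ (Set.range (c ∘ Sum.inl)).ncard :=
    calc k + 1 = (Set.range ((c ∘ Sum.inl) ∘ centralClique)).ncard :=
          ((ncard_range_comp_of_pairwise_adj hproper pairwise_adj_centralClique).trans
            (by simp)).symm
      _ ≤ _ := Set.ncard_le_ncard (Set.range_comp_subset_range _ _)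
  have htotal := Set.ncard_le_card (Set.range (c ∘ Sum.inr) ∪ Set.range (c ∘ Sum.inl))
  rw [Set.ncard_union_eq hdisj, Nat.card_fin] at htotal
  refine ⟨by change (Set.range (c ∘ Sum.inr)).ncard = 2; omega, ?_⟩
  rintro q ⟨v, rfl⟩ ⟨f, hf⟩
  exact Set.disjoint_left.mp hdisj ⟨v, rfl⟩ ⟨f, hf⟩

/-- In every equitable `(k+3)`-coloring of the reduction graph, exactly two colors occur
on the chain vertices, and neither of them occurs on any flower vertex. -/
theorem chain_uses_two_colors (l k B : ℕ) (a : Fin l → ℕ)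
    (ha : ∀ j, 0 < a j) (hk : 0 < k) (hB : 0 < B)
    (c : RV l k B a → Fin (k + 3))
    (hc : IsEquitableColoring (reductionGraph l k B a) (k + 3) c) :
    {q : Fin (k + 3) | ∃ v : Fin 2 × ChainV l k B, c (Sum.inr v) = q}.ncard = 2 ∧
      ∀ q : Fin (k + 3), (∃ v : Fin 2 × ChainV l k B, c (Sum.inr v) = q) →
        ¬ ∃ f : FlowerV l k B a, c (Sum.inl f) = q :=
  chain_uses_two_colors_general l k B a hk hB c hc
end

section
/- Let G be a finite simple graph with weight function w : V(G) → ℕ and type partition {V_1,...,V_t}. Then there exists an optimal w-multicoloring C of G such that, for every class V_x that induces an independent set in G, C(u) ⊆ C(v_x) for all u ∈ V_x, where v_x is a vertex of V_x maximizing |C(u)| over u ∈ V_x. -/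
/-!
Start from any optimal multicoloring. Two nonadjacent vertices of the same type have the same
neighbourhood, so on an independent type class every vertex may replace its colour set by a
subset of the colour set of a heaviest vertex of the class. The result is still proper and uses
no new colours, hence is still optimal, and it is nested on every independent class.
-/

open scoped Classical

open scoped Classical

/-- A `w`-multicoloring: each vertex `v` gets a set of `w v` colors, adjacent vertices
getting disjoint sets. -/
def IsMulticoloring {V : Type*} (G : SimpleGraph V) (w : V → ℕ) (C : V → Finset ℕ) : Prop :=
  (∀ v, (C v).card = w v) ∧ ∀ ⦃u v⦄, G.Adj u v → Disjoint (C u) (C v)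

/-- The total number of distinct colors used. -/
noncomputable def colorsUsed {V : Type*} (C : V → Finset ℕ) : ℕ :=
  (⋃ v, (C v : Set ℕ)).ncard

/-- An optimal `w`-multicoloring: one using the minimum total number of colors. -/
def IsOptimalMulticoloring {V : Type*} (G : SimpleGraph V) (w : V → ℕ)
    (C : V → Finset ℕ) : Prop :=
  IsMulticoloring G w C ∧
    ∀ C' : V → Finset ℕ, IsMulticoloring G w C' → colorsUsed C ≤ colorsUsed C'

section SameType

variable {V : Type*} (G : SimpleGraph V)

variable {G} in
theorem sameType.adj_of_adj {u v a : V} (h : sameType G u v) (huv : ¬ G.Adj u v)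
    (hua : G.Adj u a) : G.Adj v a := by
  have hav : a ≠ v := by rintro rfl; exact huv hua
  have : a ∈ G.neighborSet v \ {u} := h ▸ ⟨hua, hav⟩
  exact this.1

variable {G} in
theorem setOf_sameType_eq {u v : V} (h : sameType G u v) :
    {x | sameType G x u} = {x | sameType G x v} := by
  have heq := sameType_equivalence G
  ext x
  exact ⟨fun hx => heq.trans hx h, fun hx => heq.trans hx (heq.symm h)⟩

def IsIndependentType (v : V) : Prop :=
  {u | sameType G u v}.Pairwise fun a b => ¬ G.Adj a b

end SameType

theorem Setoid.exists_rep_isMax {V : Type*} [Finite V] (s : Setoid V) (f : V → ℕ) :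
    ∃ r : V → V, ∀ v, s (r v) v ∧ ∀ u, s u v → r u = r v ∧ f u ≤ f (r v) := by
  have hmax : ∀ q : Quotient s, ∃ m, ⟦m⟧ = q ∧ ∀ u, ⟦u⟧ = q → f u ≤ f m := by
    rintro ⟨v⟩
    obtain ⟨m, hm, hmax⟩ := Set.exists_max_image {u | ⟦u⟧ = ⟦v⟧} f (Set.toFinite _) ⟨v, rfl⟩
    exact ⟨m, hm, hmax⟩
  choose g hg using hmax
  refine ⟨fun v => g ⟦v⟧, fun v => ⟨Quotient.exact (hg ⟦v⟧).1, fun u hu => ?_⟩⟩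
  have huv : (⟦u⟧ : Quotient s) = ⟦v⟧ := Quotient.sound hu
  exact ⟨congrArg g huv, (hg ⟦v⟧).2 u huv⟩

theorem exists_sameType_rep {V : Type*} [Finite V] (G : SimpleGraph V) (w : V → ℕ) :
    ∃ r : V → V, (∀ u a, G.Adj u a → G.Adj (r u) a) ∧ (∀ v, w v ≤ w (r v)) ∧
      ∀ v, IsIndependentType G v →
        sameType G (r v) v ∧ ∀ u, sameType G u v → r u = r v ∧ w u ≤ w (r v) := by
  obtain ⟨r, hr⟩ := Setoid.exists_rep_isMax ⟨sameType G, sameType_equivalence G⟩ w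
  have heq := sameType_equivalence G
  refine ⟨fun v => if IsIndependentType G v then r v else v, fun u a hua => ?_,
    fun v => ?_, fun v hv => ?_⟩
  · dsimp only
    split_ifs with hu
    · have hru : sameType G u (r u) := heq.symm (hr u).1
      refine hru.adj_of_adj (fun hadj => ?_) hua
      exact hu (heq.refl u) (hr u).1 hadj.ne hadj
    · exact hua
  · dsimp only
    split_ifs
    · exact ((hr v).2 v (heq.refl v)).2
    · exact le_rfl
  · have hind : ∀ u, sameType G u v → IsIndependentType G u := fun u hu => by
      rwa [IsIndependentType, setOf_sameType_eq hu]
    simp only [if_pos hv]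
    refine ⟨(hr v).1, fun u hu => ?_⟩
    simpa only [if_pos (hind u hu)] using (hr v).2 u hu

section Multicoloring

variable {V : Type*} {G : SimpleGraph V} {w : V → ℕ}

variable (G w) in
theorem exists_isMulticoloring [Countable V] : ∃ C, IsMulticoloring G w C := by
  obtain ⟨f, hf⟩ := Countable.exists_injective_nat V
  refine ⟨fun v => (Finset.range (w v)).image (Nat.pair (f v)), fun v => ?_, fun u v huv => ?_⟩
  · rw [Finset.card_image_of_injective _ fun a b hab => (Nat.pair_eq_pair.mp hab).2,
      Finset.card_range]
  · simp only [Finset.disjoint_left, Finset.mem_image, Finset.mem_range]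
    rintro _ ⟨k, -, rfl⟩ ⟨l, -, hl⟩
    exact huv.ne (hf (Nat.pair_eq_pair.mp hl).1.symm)

variable (G w) in
theorem exists_isOptimalMulticoloring [Countable V] : ∃ C, IsOptimalMulticoloring G w C := by
  obtain ⟨C₀, hC₀⟩ := exists_isMulticoloring G w
  let s := {C | IsMulticoloring G w C}
  exact ⟨Function.argminOn colorsUsed s ⟨C₀, hC₀⟩, Function.argminOn_mem _ s _,
    fun _ hC => Function.argminOn_le colorsUsed s hC⟩

theorem IsMulticoloring.exists_subset_comp {C : V → Finset ℕ} (hC : IsMulticoloring G w C)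
    (r : V → V) (hadj : ∀ u a, G.Adj u a → G.Adj (r u) a) (hw : ∀ v, w v ≤ w (r v)) :
    ∃ C', IsMulticoloring G w C' ∧ ∀ v, C' v ⊆ C (r v) := by
  have hcard : ∀ v, w v ≤ (C (r v)).card := fun v => hC.1 (r v) ▸ hw v
  choose C' hsub hC' using fun v => Finset.exists_subset_card_eq (hcard v)
  refine ⟨C', ⟨hC', fun u v huv => ?_⟩, hsub⟩
  have hrv : G.Adj (r v) (r u) := hadj v (r u) (hadj u v huv).symm
  exact (hC.2 hrv.symm).mono (hsub u) (hsub v)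

theorem colorsUsed_le_of_forall_subset [Finite V] {C C' : V → Finset ℕ}
    (h : ∀ v, ∃ u, C' v ⊆ C u) : colorsUsed C' ≤ colorsUsed C := by
  refine Set.ncard_le_ncard (Set.iUnion_subset fun v => ?_)
    (Set.finite_iUnion fun v => (C v).finite_toSet)
  obtain ⟨u, hu⟩ := h v
  exact (Finset.coe_subset.mpr hu).trans (Set.subset_iUnion (fun u => (C u : Set ℕ)) u)

theorem IsOptimalMulticoloring.of_forall_subset [Finite V] {C C' : V → Finset ℕ}
    (hC : IsOptimalMulticoloring G w C) (hC' : IsMulticoloring G w C')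
    (h : ∀ v, ∃ u, C' v ⊆ C u) : IsOptimalMulticoloring G w C' :=
  ⟨hC', fun C'' hC'' => (colorsUsed_le_of_forall_subset h).trans (hC.2 C'' hC'')⟩

end Multicoloring

/-- There is an optimal `w`-multicoloring in which, on every independent class of the
type partition, all color sets are contained in the color set of a vertex with the most
colors. -/
theorem exists_optimal_multicoloring_nested {V : Type} [Fintype V] (G : SimpleGraph V)
    (w : V → ℕ) :
    ∃ C : V → Finset ℕ, IsOptimalMulticoloring G w C ∧
      ∀ v0 : V, ({u | sameType G u v0}.Pairwise fun a b => ¬ G.Adj a b) →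
        ∃ v : V, sameType G v v0 ∧
          (∀ u : V, sameType G u v0 → (C u).card ≤ (C v).card) ∧
          ∀ u : V, sameType G u v0 → C u ⊆ C v := by
  obtain ⟨C, hC⟩ := exists_isOptimalMulticoloring G w
  obtain ⟨r, hadj, hw, hrep⟩ := exists_sameType_rep G w
  obtain ⟨C', hC', hsub⟩ := hC.1.exists_subset_comp r hadj hw
  refine ⟨C', hC.of_forall_subset hC' fun v => ⟨r v, hsub v⟩, fun v₀ hv₀ => ?_⟩
  obtain ⟨hr₀, hclass⟩ := hrep v₀ hv₀
  have hfix : C' (r v₀) = C (r v₀) := by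
    have hsub₀ := hsub (r v₀)
    rw [(hclass _ hr₀).1] at hsub₀
    exact Finset.eq_of_subset_of_card_le hsub₀ (by rw [hC'.1, hC.1.1])
  refine ⟨r v₀, hr₀, fun u hu => ?_, fun u hu => ?_⟩
  · rw [hC'.1, hC'.1]
    exact (hclass u hu).2
  · rw [hfix, ← (hclass u hu).1]
    exact hsub u
end

section
/- Let H be a finite simple graph that is not a base graph, with weight function w : V(H) → ℕ, type partition {V_1,...,V_t} and type graph H'. Define w'(x) = Σ_{u∈V_x} w(u) if V_x induces a clique in H, and w'(x) = max_{u∈V_x} w(u) if V_x induces an independent set. Let C' be an optimal w'-multicoloring of H', and let C be obtained as follows: for each clique class V_x, partition C'(x) into sets C(u), u ∈ V_x, with |C(u)| = w(u); for each independent class V_x, assign to each u ∈ V_x an arbitrary subset C(u) ⊆ C'(x) with |C(u)| = w(u). Then C is an optimal w-multicoloring of H; in particular the minimum number of colors of a w-multicoloring of H equals the minimum number of colors of a w'-multicoloring of H'. -/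
open scoped Classical

open scoped Classical

/-!
In any `w`-multicoloring of `H`, the colors used on a class `V_x` of the type partition number
at least `w' x`: on a clique class the color sets are pairwise disjoint, so there are at least
`∑ w u` of them, and on an independent class at least `max w u`. Colors used on classes adjacent
in `H'` are disjoint, so choosing `w' x` of them for every class gives a `w'`-multicoloring of
`H'` with no more colors; hence the optimum for `H'` bounds the optimum for `H` from below.
Conversely, `C` is a `w`-multicoloring of `H` (adjacent vertices of the same type force their
class to be a clique), and the same count shows that its colors on `V_x` fill up `C' x`, so it
uses exactly as many colors as `C'`.
-/

section SameType

variable {V : Type*} {G : SimpleGraph V}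

theorem sameType.adj_of_adj_s17 {p q r : V} (h : sameType G p q) (ha : G.Adj p r) (hr : r ≠ q) :
    G.Adj q r := by
  have hm : r ∈ G.neighborSet p \ {q} := ⟨ha, hr⟩
  rw [← h] at hm
  exact hm.1

theorem isClique_typeClass_of_adj {u v : V} (huv : sameType G u v) (hadj : G.Adj u v) :
    G.IsClique (typeClass G (Quotient.mk (typeSetoid G) u)) := by
  have E := sameType_equivalence G
  have adj_v : ∀ c, sameType G u c → c ≠ v → G.Adj c v := fun c hc hcv =>
    hc.adj_of_adj_s17 hadj hcv.symm
  intro a ha b hb hab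
  have hua : sameType G u a := E.symm (Quotient.exact ha)
  have hub : sameType G u b := E.symm (Quotient.exact hb)
  by_cases hbv : b = v
  · exact hbv ▸ adj_v a hua (hbv ▸ hab)
  by_cases hav : a = v
  · exact (hav ▸ adj_v b hub hbv).symm
  exact ((E.trans (E.symm huv) hub).adj_of_adj_s17 (adj_v a hua hav).symm hab).symm

theorem typeGraph_adj_of_adj {u v : V}
    (hne : Quotient.mk (typeSetoid G) u ≠ Quotient.mk (typeSetoid G) v) (hadj : G.Adj u v) :
    (typeGraph G).Adj (Quotient.mk (typeSetoid G) u) (Quotient.mk (typeSetoid G) v) := by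
  have E := sameType_equivalence G
  refine ⟨hne, fun a b ha hb => ?_⟩
  have hav : a ≠ v := fun h => hne (by rw [← ha, h])
  have hab : a ≠ b := fun h => hne (by rw [← ha, h, hb])
  have hva : G.Adj a v := (E.symm (Quotient.exact ha)).adj_of_adj_s17 hadj hav.symm
  exact ((E.symm (Quotient.exact hb)).adj_of_adj_s17 hva.symm hab).symm

end SameType

theorem colorsUsed_mono {ι : Type*} [Finite ι] {C D : ι → Finset ℕ} (h : ∀ i, C i ⊆ D i) :
    colorsUsed C ≤ colorsUsed D :=
  Set.ncard_le_ncard (Set.iUnion_mono fun i => Finset.coe_subset.mpr (h i))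
    (Set.finite_iUnion fun i => (D i).finite_toSet)

section ClassColors

variable {V : Type*} [Fintype V] (G : SimpleGraph V)

noncomputable def typeClassFinset (x : Quotient (typeSetoid G)) : Finset V :=
  Finset.univ.filter fun v => Quotient.mk (typeSetoid G) v = x

theorem coe_typeClassFinset (x : Quotient (typeSetoid G)) :
    (typeClassFinset G x : Set V) = typeClass G x := by
  ext v
  simp [typeClassFinset, typeClass]

noncomputable def classColors (C : V → Finset ℕ) (x : Quotient (typeSetoid G)) : Finset ℕ :=
  (typeClassFinset G x).biUnion C

variable {G}

theorem mem_classColors {C : V → Finset ℕ} {x : Quotient (typeSetoid G)} {c : ℕ} :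
    c ∈ classColors G C x ↔ ∃ v, Quotient.mk (typeSetoid G) v = x ∧ c ∈ C v := by
  simp [classColors, typeClassFinset]

theorem subset_classColors (C : V → Finset ℕ) (v : V) :
    C v ⊆ classColors G C (Quotient.mk (typeSetoid G) v) := fun _ hc =>
  mem_classColors.mpr ⟨v, rfl, hc⟩

theorem classColors_subset {C : V → Finset ℕ} {C' : Quotient (typeSetoid G) → Finset ℕ}
    (hsub : ∀ v, C v ⊆ C' (Quotient.mk (typeSetoid G) v)) (x : Quotient (typeSetoid G)) :
    classColors G C x ⊆ C' x := fun _ hc => by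
  obtain ⟨v, rfl, hcv⟩ := mem_classColors.mp hc
  exact hsub v hcv

theorem colorsUsed_classColors (C : V → Finset ℕ) :
    colorsUsed (classColors G C) = colorsUsed C := by
  unfold colorsUsed
  congr 1
  ext c
  simp only [Set.mem_iUnion, Finset.mem_coe, mem_classColors]
  exact ⟨fun ⟨_, v, _, hcv⟩ => ⟨v, hcv⟩, fun ⟨v, hcv⟩ => ⟨_, v, rfl, hcv⟩⟩

theorem card_classColors_of_pairwiseDisjoint {C : V → Finset ℕ} {x : Quotient (typeSetoid G)}
    (h : (typeClass G x).PairwiseDisjoint C) :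
    (classColors G C x).card = ∑ᶠ u ∈ typeClass G x, (C u).card := by
  rw [← coe_typeClassFinset] at h ⊢
  rw [classColors, Finset.card_biUnion h, finsum_mem_coe_finset]

theorem disjoint_classColors_of_adj {C : V → Finset ℕ}
    (hC : ∀ ⦃u v⦄, G.Adj u v → Disjoint (C u) (C v)) {x y : Quotient (typeSetoid G)}
    (hxy : (typeGraph G).Adj x y) : Disjoint (classColors G C x) (classColors G C y) := by
  refine Finset.disjoint_left.mpr fun c hcx hcy => ?_
  obtain ⟨u, hu, hcu⟩ := mem_classColors.mp hcx
  obtain ⟨v, hv, hcv⟩ := mem_classColors.mp hcy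
  exact Finset.disjoint_left.mp (hC (hxy.2 u v hu hv)) hcu hcv

theorem le_card_classColors {w : V → ℕ} {w' : Quotient (typeSetoid G) → ℕ}
    (hw'c : ∀ x, G.IsClique (typeClass G x) → w' x = ∑ᶠ u ∈ typeClass G x, w u)
    (hw'i : ∀ x, ¬ G.IsClique (typeClass G x) → w' x = sSup (w '' typeClass G x))
    {C : V → Finset ℕ} (hC : IsMulticoloring G w C) (x : Quotient (typeSetoid G)) :
    w' x ≤ (classColors G C x).card := by
  by_cases hcl : G.IsClique (typeClass G x)
  · have hdisj : (typeClass G x).PairwiseDisjoint C := fun _ hu _ hv huv => hC.2 (hcl hu hv huv)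
    rw [card_classColors_of_pairwiseDisjoint hdisj, hw'c x hcl]
    exact (finsum_mem_congr rfl fun u _ => (hC.1 u).symm).le
  · obtain ⟨u₀, rfl⟩ := Quotient.exists_rep x
    have hne : (w '' typeClass G (Quotient.mk _ u₀)).Nonempty := ⟨w u₀, u₀, rfl, rfl⟩
    obtain ⟨u, hu, hwu⟩ := hne.csSup_mem ((Set.toFinite _).image w)
    rw [hw'i _ hcl, ← hwu, ← hC.1 u, ← show Quotient.mk _ u = Quotient.mk _ u₀ from hu]
    exact Finset.card_le_card (subset_classColors C u)

theorem exists_typeGraph_multicoloring_colorsUsed_le {w : V → ℕ}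
    {w' : Quotient (typeSetoid G) → ℕ}
    (hw'c : ∀ x, G.IsClique (typeClass G x) → w' x = ∑ᶠ u ∈ typeClass G x, w u)
    (hw'i : ∀ x, ¬ G.IsClique (typeClass G x) → w' x = sSup (w '' typeClass G x))
    {C : V → Finset ℕ} (hC : IsMulticoloring G w C) :
    ∃ D, IsMulticoloring (typeGraph G) w' D ∧ colorsUsed D ≤ colorsUsed C := by
  choose D hDsub hDcard using fun x =>
    Finset.exists_subset_card_eq (le_card_classColors hw'c hw'i hC x)
  refine ⟨D, ⟨hDcard, fun x y hxy => ?_⟩, ?_⟩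
  · exact (disjoint_classColors_of_adj hC.2 hxy).mono (hDsub x) (hDsub y)
  · exact (colorsUsed_mono hDsub).trans (colorsUsed_classColors C).le

end ClassColors

theorem isMulticoloring_of_subset_typeGraph {V : Type*} {H : SimpleGraph V} {w : V → ℕ}
    {C' : Quotient (typeSetoid H) → Finset ℕ}
    (hC' : ∀ ⦃x y⦄, (typeGraph H).Adj x y → Disjoint (C' x) (C' y)) {C : V → Finset ℕ}
    (hsub : ∀ v, C v ⊆ C' (Quotient.mk (typeSetoid H) v)) (hcard : ∀ v, (C v).card = w v)
    (hdisj : ∀ u v : V, u ≠ v → sameType H u v →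
      H.IsClique (typeClass H (Quotient.mk (typeSetoid H) u)) → Disjoint (C u) (C v)) :
    IsMulticoloring H w C := by
  refine ⟨hcard, fun u v huv => ?_⟩
  by_cases hq : Quotient.mk (typeSetoid H) u = Quotient.mk (typeSetoid H) v
  · have hst : sameType H u v := Quotient.exact hq
    exact hdisj u v huv.ne hst (isClique_typeClass_of_adj hst huv)
  · exact (hC' (typeGraph_adj_of_adj hq huv)).mono (hsub u) (hsub v)

theorem multicoloring_recursive_step_general {V : Type} [Fintype V] (H : SimpleGraph V)
    (w : V → ℕ) (w' : Quotient (typeSetoid H) → ℕ)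
    (hw'c : ∀ x, H.IsClique (typeClass H x) → w' x = ∑ᶠ u ∈ typeClass H x, w u)
    (hw'i : ∀ x, ¬ H.IsClique (typeClass H x) → w' x = sSup (w '' typeClass H x))
    (C' : Quotient (typeSetoid H) → Finset ℕ)
    (hC' : IsOptimalMulticoloring (typeGraph H) w' C')
    (C : V → Finset ℕ)
    (hsub : ∀ v, C v ⊆ C' (Quotient.mk (typeSetoid H) v))
    (hcard : ∀ v, (C v).card = w v)
    (hdisj : ∀ u v : V, u ≠ v → sameType H u v →
      H.IsClique (typeClass H (Quotient.mk (typeSetoid H) u)) → Disjoint (C u) (C v)) :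
    IsOptimalMulticoloring H w C ∧ colorsUsed C = colorsUsed C' := by
  have hC : IsMulticoloring H w C := isMulticoloring_of_subset_typeGraph hC'.1.2 hsub hcard hdisj
  have hclass : classColors H C = C' := funext fun x =>
    Finset.eq_of_subset_of_card_le (classColors_subset hsub x)
      ((hC'.1.1 x).trans_le (le_card_classColors hw'c hw'i hC x))
  have hcolors : colorsUsed C = colorsUsed C' := by rw [← colorsUsed_classColors, hclass]
  refine ⟨⟨hC, fun C'' hC'' => ?_⟩, hcolors⟩
  obtain ⟨D, hD, hDle⟩ := exists_typeGraph_multicoloring_colorsUsed_le hw'c hw'i hC''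
  exact hcolors.trans_le ((hC'.2 D hD).trans hDle)

/-- Correctness of the recursive step of the coloring algorithm. -/
theorem multicoloring_recursive_step {V : Type} [Fintype V] (H : SimpleGraph V)
    (hnb : ¬ IsBaseGraph H) (w : V → ℕ) (w' : Quotient (typeSetoid H) → ℕ)
    (hw'c : ∀ x, H.IsClique (typeClass H x) → w' x = ∑ᶠ u ∈ typeClass H x, w u)
    (hw'i : ∀ x, ¬ H.IsClique (typeClass H x) → w' x = sSup (w '' typeClass H x))
    (C' : Quotient (typeSetoid H) → Finset ℕ)
    (hC' : IsOptimalMulticoloring (typeGraph H) w' C')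
    (C : V → Finset ℕ)
    (hsub : ∀ v, C v ⊆ C' (Quotient.mk (typeSetoid H) v))
    (hcard : ∀ v, (C v).card = w v)
    (hdisj : ∀ u v : V, u ≠ v → sameType H u v →
      H.IsClique (typeClass H (Quotient.mk (typeSetoid H) u)) → Disjoint (C u) (C v)) :
    IsOptimalMulticoloring H w C ∧ colorsUsed C = colorsUsed C' :=
  multicoloring_recursive_step_general H w w' hw'c hw'i C' hC' C hsub hcard hdisj
end
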